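/- Let A be the n×n lower triangular matrix with all entries on and below the diagonal equal to 1 within a band of width p (i.e., a_{ij} = 1 if 0 ≤ i − j ≤ p − 1 and 0 otherwise), and let a_j denote the j-th column. Then max_{i≠j} (a_i^T a_j)/(||a_i||_2 ||a_j||_2) = sqrt((p−1)/p), provided n ≥ p + 1. -/
import Mathlib

lemma card_count (a b n : ℕ) :
    ((Finset.range n).filter (fun k => a ≤ k ∧ k < b)).card = min b n - a := by
  have h : (Finset.range n).filter (fun k => a ≤ k ∧ k < b) = Finset.Ico a (min b n) := by
    ext k
    simp only [Finset.mem_filter, Finset.mem_range, Finset.mem_Ico]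
    omega
  rw [h, Nat.card_Ico]

lemma sum_col {n : ℕ} (p : ℕ) (A : Matrix (Fin n) (Fin n) ℝ)
    (hA : ∀ i j : Fin n, A i j = if j.1 ≤ i.1 ∧ i.1 < j.1 + p then 1 else 0)
    (i j : Fin n) :
    (∑ k, A k i * A k j) = ((min (min (i.1 + p) (j.1 + p)) n - max i.1 j.1 : ℕ) : ℝ) := by
  have h1 : ∀ k : Fin n, A k i * A k j =
      (if max i.1 j.1 ≤ k.1 ∧ k.1 < min (i.1 + p) (j.1 + p) then (1:ℝ) else 0) := by
    intro k
    rw [hA, hA]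
    split_ifs <;> norm_num <;> omega
  calc (∑ k, A k i * A k j)
      = ∑ k : Fin n, (if max i.1 j.1 ≤ k.1 ∧ k.1 < min (i.1 + p) (j.1 + p) then (1:ℝ) else 0) :=
        Finset.sum_congr rfl (fun k _ => h1 k)
    _ = ∑ m ∈ Finset.range n, if max i.1 j.1 ≤ m ∧ m < min (i.1 + p) (j.1 + p) then (1:ℝ) else 0 :=
        Fin.sum_univ_eq_sum_range (fun m => if max i.1 j.1 ≤ m ∧ m < min (i.1 + p) (j.1 + p) then (1:ℝ) else 0) n
    _ = (((Finset.range n).filter (fun m => max i.1 j.1 ≤ m ∧ m < min (i.1 + p) (j.1 + p))).card : ℝ) := by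
        rw [Finset.sum_boole]
    _ = _ := by rw [card_count]

lemma sum_sq {n : ℕ} (p : ℕ) (A : Matrix (Fin n) (Fin n) ℝ)
    (hA : ∀ i j : Fin n, A i j = if j.1 ≤ i.1 ∧ i.1 < j.1 + p then 1 else 0)
    (i : Fin n) :
    (∑ k, A k i ^ 2) = ((min (i.1 + p) n - i.1 : ℕ) : ℝ) := by
  have h : (∑ k, A k i ^ 2) = ∑ k, A k i * A k i := by
    apply Finset.sum_congr rfl; intro k _; ring
  rw [h, sum_col p A hA i i]
  simp

lemma aux_sub (s p : ℕ) (h : s ≤ p) : (s - 1) * p ≤ (p - 1) * s := by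
  cases s with
  | zero => simp
  | succ m =>
    obtain ⟨q, rfl⟩ : ∃ q, p = q + 1 := ⟨p - 1, by omega⟩
    simp only [Nat.succ_sub_one]
    have hm : m ≤ q := by omega
    nlinarith

lemma key_nat (p n i j : ℕ) (hp : 1 ≤ p) (hi : i < n) (hj : j < n) (hij : i < j) :
    (min (min (i + p) (j + p)) n - max i j) ^ 2 * p
      ≤ (p - 1) * ((min (i + p) n - i) * (min (j + p) n - j)) := by
  have h1 : (min (min (i + p) (j + p)) n - max i j) + 1 ≤ min (i + p) n - i := by omega
  have h2 : (min (min (i + p) (j + p)) n - max i j) ≤ min (j + p) n - j := by omega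
  have h3 : min (i + p) n - i ≤ p := by omega
  set t := min (min (i + p) (j + p)) n - max i j
  set si := min (i + p) n - i
  set sj := min (j + p) n - j
  have h4 : t ^ 2 * p ≤ ((si - 1) * p) * sj := by
    have e : t ^ 2 * p = (t * p) * t := by ring
    rw [e]
    exact Nat.mul_le_mul (Nat.mul_le_mul (by omega) le_rfl) h2
  refine h4.trans ?_
  calc (si - 1) * p * sj ≤ (p - 1) * si * sj :=
        Nat.mul_le_mul_right _ (aux_sub si p h3)
    _ = (p - 1) * (si * sj) := by ring

/-- The coherence of the banded all-ones lower-triangular matrix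
(`aᵢⱼ = 1` iff `0 ≤ i − j ≤ p − 1`) equals `√((p−1)/p)` when `n ≥ p + 1`. -/
theorem coherence_banded_lower_triangular (n p : ℕ) (hp : 1 ≤ p) (hn : p + 1 ≤ n)
    (A : Matrix (Fin n) (Fin n) ℝ)
    (hA : ∀ i j : Fin n, A i j = if j.1 ≤ i.1 ∧ i.1 < j.1 + p then 1 else 0) :
    IsGreatest
      {r : ℝ | ∃ i j : Fin n, i ≠ j ∧
        r = (∑ k, A k i * A k j) /
          (Real.sqrt (∑ k, A k i ^ 2) * Real.sqrt (∑ k, A k j ^ 2))}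
      (Real.sqrt (((p : ℝ) - 1) / (p : ℝ))) := by
  have hcast : ((p : ℝ) - 1) = ((p - 1 : ℕ) : ℝ) := by
    rw [Nat.cast_sub hp]; norm_num
  constructor
  · -- membership
    rcases eq_or_lt_of_le hp with h1 | h2
    · -- p = 1
      have hp1 : p = 1 := h1.symm
      subst hp1
      refine ⟨⟨0, by omega⟩, ⟨1, by omega⟩, by simp [Fin.ext_iff], ?_⟩
      rw [sum_col 1 A hA]
      have e : (min (min (0 + 1) (1 + 1)) n - max 0 1) = 0 := by omega
      simp only [e]
      norm_num
    · -- p ≥ 2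
      refine ⟨⟨n - p, by omega⟩, ⟨n - p + 1, by omega⟩, by simp [Fin.ext_iff], ?_⟩
      rw [sum_col p A hA, sum_sq p A hA, sum_sq p A hA]
      simp only []
      have e1 : (min (min (n - p + p) (n - p + 1 + p)) n - max (n - p) (n - p + 1)) = p - 1 := by
        omega
      have e2 : (min (n - p + p) n - (n - p)) = p := by omega
      have e3 : (min (n - p + 1 + p) n - (n - p + 1)) = p - 1 := by omega
      rw [e1, e2, e3, hcast]
      have ha : (0:ℝ) < ((p - 1 : ℕ) : ℝ) := by
        have : 1 ≤ p - 1 := by omega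
        exact_mod_cast Nat.lt_of_lt_of_le Nat.zero_lt_one this
      have hpr : (0:ℝ) < (p : ℝ) := by exact_mod_cast Nat.lt_of_lt_of_le Nat.zero_lt_one hp
      have hsa : Real.sqrt ((p - 1 : ℕ) : ℝ) ≠ 0 := by positivity
      have hsp : Real.sqrt ((p : ℕ) : ℝ) ≠ 0 := by positivity
      rw [Real.sqrt_div (le_of_lt ha)]
      rw [eq_div_iff (by positivity : Real.sqrt ((p:ℕ):ℝ) * Real.sqrt ((p-1:ℕ):ℝ) ≠ 0)]
      have e4 : Real.sqrt ((p-1:ℕ):ℝ) / Real.sqrt ((p:ℕ):ℝ) *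
          (Real.sqrt ((p:ℕ):ℝ) * Real.sqrt ((p-1:ℕ):ℝ)) =
          (Real.sqrt ((p-1:ℕ):ℝ) * Real.sqrt ((p-1:ℕ):ℝ)) *
          (Real.sqrt ((p:ℕ):ℝ) / Real.sqrt ((p:ℕ):ℝ)) := by ring
      rw [e4, div_self hsp, mul_one, Real.mul_self_sqrt (le_of_lt ha)]
  · -- upper bound
    rintro r ⟨i, j, hij, rfl⟩
    rw [sum_col p A hA, sum_sq p A hA, sum_sq p A hA]
    have hsi1 : 1 ≤ min (i.1 + p) n - i.1 := by have := i.2; omega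
    have hsj1 : 1 ≤ min (j.1 + p) n - j.1 := by have := j.2; omega
    set t := (min (min (i.1 + p) (j.1 + p)) n - max i.1 j.1) with ht
    set si := (min (i.1 + p) n - i.1) with hsi
    set sj := (min (j.1 + p) n - j.1) with hsj
    have hkey : t ^ 2 * p ≤ (p - 1) * (si * sj) := by
      rcases lt_or_gt_of_ne (fun h => hij (Fin.ext h) : i.1 ≠ j.1) with h | h
      · exact key_nat p n i.1 j.1 hp i.2 j.2 h
      · have hk := key_nat p n j.1 i.1 hp j.2 i.2 h
        calc t ^ 2 * p = (min (min (j.1+p) (i.1+p)) n - max j.1 i.1) ^ 2 * p := by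
              rw [ht, min_comm (i.1+p), max_comm]
          _ ≤ (p - 1) * ((min (j.1+p) n - j.1) * (min (i.1+p) n - i.1)) := hk
          _ = (p - 1) * (si * sj) := by rw [Nat.mul_comm (min (j.1+p) n - j.1)]
    have hsipos : (0:ℝ) < (si : ℝ) := by exact_mod_cast hsi1
    have hsjpos : (0:ℝ) < (sj : ℝ) := by exact_mod_cast hsj1
    have hppos : (0:ℝ) < (p : ℝ) := by exact_mod_cast hp
    have hsd : Real.sqrt (si:ℝ) * Real.sqrt (sj:ℝ) = Real.sqrt ((si : ℝ) * sj) := by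
      rw [Real.sqrt_mul (le_of_lt hsipos)]
    rw [hsd]
    have htr : (t : ℝ) = Real.sqrt ((t : ℝ)^2) := by
      rw [Real.sqrt_sq (by positivity)]
    rw [htr, ← Real.sqrt_div (by positivity)]
    apply Real.sqrt_le_sqrt
    rw [hcast, div_le_div_iff₀ (by positivity) hppos]
    calc (t:ℝ)^2 * p = ((t^2 * p : ℕ) : ℝ) := by push_cast; ring
      _ ≤ (((p-1) * (si * sj) : ℕ) : ℝ) := by exact_mod_cast hkey
      _ = ((p-1:ℕ):ℝ) * ((si:ℝ) * sj) := by push_cast; ring
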